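/- arXiv:1910.04258 — 3 statements merged into one kernel-verified Lean document; each statement's English description precedes it below -/
import Mathlib

section
/- For all n ≥ 1, the positive Eulerian polynomial A_n^+(t) = ∑_{w ∈ S_n, sgn(w)=1} t^{des(w)+1} satisfies A_n^+(t)/(1-t)^{n+1} = ∑_{k ≥ 0} ((k^n + k^{⌈n/2⌉})/2) t^k as formal power series. -/
open scoped Classical

/-- Number of descents of a permutation of `{0,…,n-1}`. -/
noncomputable def desA {n : ℕ} (w : Equiv.Perm (Fin n)) : ℕ :=
  ((Finset.range (n - 1)).filter (fun i =>
    ∃ h : i + 1 < n, w ⟨i + 1, h⟩ < w ⟨i, Nat.lt_of_succ_lt h⟩)).card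

/-- Number of inversions of a permutation. -/
noncomputable def invA {n : ℕ} (w : Equiv.Perm (Fin n)) : ℕ :=
  (Finset.univ.filter (fun p : Fin n × Fin n => p.1 < p.2 ∧ w p.2 < w p.1)).card

/-!
Multiplying by `(1 - X)⁻ⁿ⁻¹ = ∑ⱼ C(n + j, n) Xʲ` and comparing coefficients of `Xᵏ` turns the
claim into `∑_{w even} C(k + n - 1 - des w, n) = (kⁿ + k^⌈n/2⌉) / 2`.
Every word `f : [n] → [k]` has a unique stable sorting permutation `w = Tuple.sort f`: `f ∘ w`
is weakly increasing, strictly so at the descents of `w`, and adding to its `j`-th entry the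
number of ascents of `w` before `j` makes it strictly increasing, so `C(k + n - 1 - des w, n)`
words sort to `w`. Summed over `w` this counts all `kⁿ` words. Weighted by `sign w`, it counts
words by `(-1)^inv f`, because sorting preserves the inversion count; that signed count is
`k^⌈n/2⌉`, since once the rest of a word is fixed, the contributions of two first letters
`x ≠ y` cancel against those of `y, x`.
-/

open Finset Equiv.Perm

theorem sum_fin_succ_fun {α M : Type*} [Fintype α] [AddCommMonoid M] {n : ℕ}
    (F : (Fin (n + 1) → α) → M) : ∑ f, F f = ∑ x, ∑ g, F (Fin.cons x g) := by
  rw [← (Fin.consEquiv fun _ => α).sum_comp, Fintype.sum_prod_type]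
  rfl

section Inversions

variable {α : Type*} [LinearOrder α] {n : ℕ}

def numInversions (f : Fin n → α) : ℕ :=
  #{p : Fin n × Fin n | p.1 < p.2 ∧ f p.2 < f p.1}

theorem sign_eq_neg_one_pow_numInversions (σ : Equiv.Perm (Fin n)) :
    (sign σ : ℤ) = (-1) ^ numInversions σ := by
  rw [sign_eq_prod_prod_Iio]
  push_cast
  simp only [apply_ite (Units.val), Units.val_one, Units.val_neg, prod_ite, prod_const_one,
    prod_const, one_mul, prod_pow_eq_pow_sum]
  congr 1
  rw [numInversions, card_filter, ← univ_product_univ, sum_product_right]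
  refine sum_congr rfl fun j _ => ?_
  rw [← filter_gt_eq_Iio, filter_filter, card_filter]
  refine sum_congr rfl fun i _ => ?_
  simp only [not_lt]
  congr 1
  exact propext <| and_congr_right fun hij =>
    ⟨fun h => h.lt_of_ne (σ.injective.ne hij.ne'), le_of_lt⟩

theorem lt_iff_toLex_lt_sort (f : Fin n → α) {i j : Fin n} :
    i < j ↔ toLex (f (Tuple.sort f i), Tuple.sort f i)
      < toLex (f (Tuple.sort f j), Tuple.sort f j) :=
  (Tuple.eq_sort_iff'.1 rfl).lt_iff_lt.symm

theorem numInversions_sort (f : Fin n → α) :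
    numInversions ⇑(Tuple.sort f) = numInversions f := by
  set σ := Tuple.sort f
  refine card_equiv ((Equiv.prodComm _ _).trans (Equiv.prodCongr σ σ)) fun ⟨i, j⟩ => ?_
  simp only [mem_filter, mem_univ, true_and, Equiv.trans_apply, Equiv.prodComm_apply,
    Prod.swap_prod_mk, Equiv.prodCongr_apply, Prod.map_apply]
  rw [lt_iff_toLex_lt_sort f, Prod.Lex.toLex_lt_toLex]
  exact ⟨fun ⟨h, hσ⟩ => ⟨hσ, h.resolve_right fun h' => h'.2.not_gt hσ⟩,
    fun ⟨hσ, h⟩ => ⟨Or.inl h, hσ⟩⟩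

theorem sign_sort (f : Fin n → α) : (sign (Tuple.sort f) : ℤ) = (-1) ^ numInversions f := by
  rw [sign_eq_neg_one_pow_numInversions, numInversions_sort]

theorem numInversions_cons (x : α) (g : Fin n → α) :
    numInversions (Fin.cons x g : Fin (n + 1) → α) = #{i | g i < x} + numInversions g := by
  simp only [numInversions, card_filter, ← univ_product_univ, sum_product]
  rw [Fin.sum_univ_succ]
  congr 1
  · rw [Fin.sum_univ_succ]
    simp [Fin.succ_pos]
  · refine sum_congr rfl fun i _ => ?_
    rw [Fin.sum_univ_succ]
    simp [Fin.succ_lt_succ_iff]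

theorem neg_one_pow_numInversions_cons_cons (x y : α) (g : Fin n → α) :
    (-1 : ℤ) ^ numInversions (Fin.cons x (Fin.cons y g : Fin (n + 1) → α) : Fin (n + 2) → α)
      = (if y < x then -1 else 1) * ((-1) ^ #{i | g i < x} * (-1) ^ #{i | g i < y})
        * (-1) ^ numInversions g := by
  rw [numInversions_cons, numInversions_cons, Fin.card_filter_univ_succ']
  simp only [Fin.cons_zero, Fin.cons_succ, pow_add]
  split_ifs <;> ring

end Inversions

section SignedCount

variable {α : Type*} [LinearOrder α] [Fintype α]

theorem sum_sum_ite_lt_mul (u : α → ℤ) :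
    ∑ x, ∑ y, (if y < x then -1 else 1) * (u x * u y) = ∑ x, u x ^ 2 := by
  have hsymm : ∀ x y, ((if y < x then -1 else 1) + (if x < y then -1 else 1)) * (u x * u y)
      = if x = y then 2 * u x ^ 2 else 0 := by
    intro x y
    rcases lt_trichotomy x y with h | rfl | h
    · simp [h, h.ne, h.not_gt]
    · simp only [lt_self_iff_false, if_false, if_true]; ring
    · simp [h, h.ne', h.not_gt]
  have h2 : 2 * ∑ x, ∑ y, (if y < x then -1 else 1) * (u x * u y) = 2 * ∑ x, u x ^ 2 := by
    calc 2 * ∑ x, ∑ y, (if y < x then -1 else 1) * (u x * u y)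
        = ∑ x, ∑ y, ((if y < x then -1 else 1) + (if x < y then -1 else 1)) * (u x * u y) := by
          rw [two_mul]
          nth_rw 2 [sum_comm]
          rw [← sum_add_distrib]
          refine sum_congr rfl fun x _ => ?_
          rw [← sum_add_distrib]
          exact sum_congr rfl fun y _ => by ring
      _ = 2 * ∑ x, u x ^ 2 := by simp only [hsymm, sum_ite_eq, mem_univ, if_true, mul_sum]
  linarith

theorem sum_neg_one_pow_numInversions :
    ∀ n : ℕ, ∑ f : Fin n → α, (-1 : ℤ) ^ numInversions f
      = Fintype.card α ^ ((n + 1) / 2)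
  | 0 => by simp [numInversions]
  | 1 => by simp [numInversions, Fin.lt_def]
  | n + 2 => by
    calc ∑ f : Fin (n + 2) → α, (-1 : ℤ) ^ numInversions f
        = ∑ g : Fin n → α, (∑ x, ∑ y, (if y < x then -1 else 1)
            * ((-1) ^ #{i | g i < x} * (-1) ^ #{i | g i < y})) * (-1) ^ numInversions g := by
          simp only [sum_fin_succ_fun, neg_one_pow_numInversions_cons_cons, sum_mul]
          exact (sum_congr rfl fun _ _ => sum_comm).trans sum_comm
      _ = ∑ g : Fin n → α, (Fintype.card α : ℤ) * (-1) ^ numInversions g := by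
          have hsq (c : ℕ) : ((-1 : ℤ) ^ c) ^ 2 = 1 := by
            rw [← pow_mul, pow_mul', neg_one_sq, one_pow]
          simp only [sum_sum_ite_lt_mul, hsq, sum_const, card_univ, nsmul_eq_mul, mul_one]
      _ = Fintype.card α ^ ((n + 2 + 1) / 2) := by
          rw [← mul_sum, sum_neg_one_pow_numInversions n,
            show (n + 2 + 1) / 2 = (n + 1) / 2 + 1 by omega, pow_succ']

end SignedCount

section Counting

variable {m k : ℕ}

def MonotoneStrictAt (D : Finset ℕ) (g : Fin (m + 1) → Fin k) : Prop :=
  ∀ i : Fin m, (g i.castSucc : ℕ) + (if (i : ℕ) ∈ D then 1 else 0) ≤ g i.succ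

def weakStepsBefore (D : Finset ℕ) (j : ℕ) : ℕ := #(range j \ D)

variable {D : Finset ℕ}

theorem weakStepsBefore_zero : weakStepsBefore D 0 = 0 := by
  simp [weakStepsBefore]

theorem weakStepsBefore_succ_add (j : ℕ) :
    weakStepsBefore D (j + 1) + (if j ∈ D then 1 else 0) = weakStepsBefore D j + 1 := by
  by_cases hj : j ∈ D
  · simp [weakStepsBefore, range_add_one, insert_sdiff_of_mem _ hj, hj]
  · simp [weakStepsBefore, range_add_one, insert_sdiff_of_notMem _ hj, hj]

theorem weakStepsBefore_mono : Monotone (weakStepsBefore D) :=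
  fun _ _ hij => card_le_card (sdiff_subset_sdiff (range_subset_range.2 hij) le_rfl)

theorem weakStepsBefore_of_subset (hD : D ⊆ range m) : weakStepsBefore D m = m - #D := by
  rw [weakStepsBefore, card_sdiff_of_subset hD, card_range]

theorem add_ite_le_iff_add_weakStepsBefore_lt {a b j : ℕ} :
    a + (if j ∈ D then 1 else 0) ≤ b
      ↔ a + weakStepsBefore D j < b + weakStepsBefore D (j + 1) := by
  have := weakStepsBefore_succ_add (D := D) j
  split_ifs at * <;> omega

theorem monotone_sub_weakStepsBefore {M : ℕ} {b : Fin (m + 1) → Fin M} (hb : StrictMono b) :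
    Monotone fun j : Fin (m + 1) => (b j : ℤ) - weakStepsBefore D j := by
  refine Fin.monotone_iff_le_succ.2 fun i => ?_
  have hlt := Fin.lt_def.1 (hb (Fin.castSucc_lt_succ (i := i)))
  have := weakStepsBefore_succ_add (D := D) i
  simp only [Fin.val_castSucc, Fin.val_succ] at hlt ⊢
  split_ifs at this <;> omega

theorem card_strictMono_fin (n M : ℕ) : #{b : Fin n → Fin M | StrictMono b} = M.choose n := by
  let e : {b : Fin n → Fin M // StrictMono b} ≃ (Fin n ↪o Fin M) :=
    { toFun b := OrderEmbedding.ofStrictMono b.1 b.2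
      invFun e := ⟨e, e.strictMono⟩
      left_inv _ := rfl
      right_inv _ := rfl }
  rw [← Fintype.card_subtype, Fintype.card_congr (e.trans Set.powersetCard.ofFinEmbEquiv),
    ← Nat.card_eq_fintype_card, Set.powersetCard.card, Nat.card_eq_fintype_card, Fintype.card_fin]

theorem card_monotoneStrictAt (hD : D ⊆ range m) :
    #{g : Fin (m + 1) → Fin k | MonotoneStrictAt D g} = (k + m - #D).choose (m + 1) := by
  have hDm : #D ≤ m := by simpa using card_le_card hD
  have hlast := weakStepsBefore_of_subset hD
  have hbound {b : Fin (m + 1) → Fin (k + m - #D)} (hb : StrictMono b) (j : Fin (m + 1)) :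
      weakStepsBefore D j ≤ b j ∧ b j - weakStepsBefore D j < k := by
    have h0 := monotone_sub_weakStepsBefore (D := D) hb (Fin.zero_le j)
    have hm := monotone_sub_weakStepsBefore (D := D) hb (Fin.le_last j)
    have := (b (Fin.last m)).isLt
    simp only [Fin.val_zero, Fin.val_last, weakStepsBefore_zero, hlast] at h0 hm
    omega
  rw [← card_strictMono_fin]
  refine card_bij'
    (fun g _ j => ⟨g j + weakStepsBefore D j, by
      have := weakStepsBefore_mono (D := D) (Nat.le_of_lt_succ j.isLt)
      have := (g j).isLt
      omega⟩)
    (fun b hb j => ⟨b j - weakStepsBefore D j, (hbound (mem_filter.1 hb).2 j).2⟩) ?_ ?_ ?_ ?_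
  · intro g hg
    refine mem_filter.2 ⟨mem_univ _, Fin.strictMono_iff_lt_succ.2 fun i => ?_⟩
    exact Fin.lt_def.2 (add_ite_le_iff_add_weakStepsBefore_lt.1 ((mem_filter.1 hg).2 i))
  · intro b hb
    have hb := (mem_filter.1 hb).2
    refine mem_filter.2 ⟨mem_univ _, fun i => add_ite_le_iff_add_weakStepsBefore_lt.2 ?_⟩
    have := (hbound hb i.castSucc).1
    have := (hbound hb i.succ).1
    have := Fin.lt_def.1 (hb (Fin.castSucc_lt_succ (i := i)))
    simp only [Fin.val_castSucc, Fin.val_succ] at *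
    omega
  · intro g _
    ext j
    simp
  · intro b hb
    ext j
    simp [(hbound (mem_filter.1 hb).2 j).1]

end Counting

section Descents

variable {m k : ℕ}

def descentSet {n : ℕ} (w : Equiv.Perm (Fin n)) : Finset ℕ :=
  {i ∈ range (n - 1) | ∃ h : i + 1 < n, w ⟨i + 1, h⟩ < w ⟨i, Nat.lt_of_succ_lt h⟩}

theorem desA_eq_card_descentSet {n : ℕ} (w : Equiv.Perm (Fin n)) : desA w = #(descentSet w) :=
  rfl

theorem descentSet_subset (w : Equiv.Perm (Fin (m + 1))) : descentSet w ⊆ range m :=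
  filter_subset _ _

theorem desA_le (w : Equiv.Perm (Fin (m + 1))) : desA w ≤ m :=
  (card_le_card (descentSet_subset w)).trans_eq (card_range m)

theorem mem_descentSet {w : Equiv.Perm (Fin (m + 1))} (i : Fin m) :
    (i : ℕ) ∈ descentSet w ↔ w i.succ < w i.castSucc := by
  simp only [descentSet, mem_filter, mem_range, add_tsub_cancel_right, i.isLt,
    Nat.add_lt_add_iff_right, exists_true_left, true_and]
  rfl

theorem toLex_lt_toLex_iff_val_add_ite_le {β : Type*} [LinearOrder β] {a b : Fin k} {x y : β}
    (hxy : x ≠ y) :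
    toLex (a, x) < toLex (b, y) ↔ (a : ℕ) + (if y < x then 1 else 0) ≤ b := by
  rw [Prod.Lex.toLex_lt_toLex, Fin.lt_def, Fin.ext_iff]
  rcases hxy.lt_or_gt with h | h
  · simp only [h, h.not_gt, and_true, if_false]; omega
  · simp only [h, h.not_gt, and_false, if_true, or_false]; omega

theorem eq_sort_iff_monotoneStrictAt {f : Fin (m + 1) → Fin k} {σ : Equiv.Perm (Fin (m + 1))} :
    σ = Tuple.sort f ↔ MonotoneStrictAt (descentSet σ) (f ∘ σ) := by
  rw [Tuple.eq_sort_iff', Fin.strictMono_iff_lt_succ]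
  refine forall_congr' fun i => ?_
  simp only [mem_descentSet]
  exact toLex_lt_toLex_iff_val_add_ite_le (σ.injective.ne (Fin.castSucc_lt_succ (i := i)).ne)

theorem card_sort_eq (w : Equiv.Perm (Fin (m + 1))) :
    #{f : Fin (m + 1) → Fin k | Tuple.sort f = w} = (k + m - desA w).choose (m + 1) := by
  rw [desA_eq_card_descentSet, ← card_monotoneStrictAt (descentSet_subset w)]
  refine card_equiv (w.arrowCongr (Equiv.refl _)).symm fun f => ?_
  simp only [mem_filter, mem_univ, true_and, eq_comm, eq_sort_iff_monotoneStrictAt]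
  rfl

end Descents

section Sums

variable {m : ℕ}

theorem sum_choose_desA (k : ℕ) :
    ∑ w : Equiv.Perm (Fin (m + 1)), (k + m - desA w).choose (m + 1) = k ^ (m + 1) := by
  simp_rw [← card_sort_eq]
  rw [← card_eq_sum_card_fiberwise fun f _ => mem_univ (Tuple.sort f)]
  simp

theorem sum_sign_mul_choose_desA (k : ℕ) :
    ∑ w : Equiv.Perm (Fin (m + 1)), (sign w : ℤ) * (k + m - desA w).choose (m + 1)
      = k ^ ((m + 2) / 2) := by
  simp_rw [← card_sort_eq, mul_comm (sign _ : ℤ), ← nsmul_eq_mul, ← sum_const]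
  rw [sum_fiberwise']
  simp only [sign_sort]
  rw [sum_neg_one_pow_numInversions, Fintype.card_fin]

theorem sum_add_sum_sign_smul {α M : Type*} [Fintype α] [DecidableEq α] [AddCommGroup M]
    (F : Equiv.Perm α → M) :
    ∑ σ, F σ + ∑ σ, (sign σ : ℤ) • F σ = 2 • ∑ σ with sign σ = 1, F σ := by
  rw [← sum_add_distrib, sum_filter, smul_sum]
  refine sum_congr rfl fun σ _ => ?_
  rcases Int.units_eq_one_or (sign σ) with h | h <;> simp [h, two_smul]

theorem sum_even_choose_desA (k : ℕ) :
    ∑ w : Equiv.Perm (Fin (m + 1)) with sign w = 1, ((k + m - desA w).choose (m + 1) : ℚ)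
      = ((k : ℚ) ^ (m + 1) + (k : ℚ) ^ ((m + 2) / 2)) / 2 := by
  have h := sum_add_sum_sign_smul fun w : Equiv.Perm (Fin (m + 1)) =>
    ((k + m - desA w).choose (m + 1) : ℚ)
  have h1 := congrArg (Nat.cast : ℕ → ℚ) (sum_choose_desA (m := m) k)
  have h2 := congrArg (Int.cast : ℤ → ℚ) (sum_sign_mul_choose_desA (m := m) k)
  push_cast at h1 h2
  simp only [zsmul_eq_mul, two_nsmul, h1, h2] at h
  linarith

end Sums

open PowerSeries

theorem coeff_invOneSubPow_mul_X_pow {R : Type*} [CommRing R] {d m : ℕ} (hd : d ≤ m) (k : ℕ) :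
    coeff k ((invOneSubPow R (m + 2)).val * X ^ (d + 1)) = ((k + m - d).choose (m + 1) : R) := by
  rw [mul_comm, invOneSubPow_val_succ_eq_mk_add_choose, coeff_X_pow_mul', coeff_mk]
  split_ifs with h
  · congr 2; omega
  · rw [Nat.choose_eq_zero_of_lt (by omega), Nat.cast_zero]

theorem positive_eulerian_series (n : ℕ) (hn : 1 ≤ n) :
    ∑ w ∈ Finset.univ.filter (fun w : Equiv.Perm (Fin n) => Equiv.Perm.sign w = 1),
        (PowerSeries.X : PowerSeries ℚ) ^ (desA w + 1)
      = (1 - PowerSeries.X) ^ (n + 1) *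
          PowerSeries.mk (fun k => ((k : ℚ) ^ n + (k : ℚ) ^ ((n + 1) / 2)) / 2) := by
  obtain ⟨m, rfl⟩ : ∃ m, n = m + 1 := ⟨n - 1, by omega⟩
  rw [show m + 1 + 1 = m + 2 from rfl]
  set P := ∑ w : Equiv.Perm (Fin (m + 1)) with sign w = 1, (X : ℚ⟦X⟧) ^ (desA w + 1)
  have hcoeff : (invOneSubPow ℚ (m + 2)).val * P
      = PowerSeries.mk fun k => ((k : ℚ) ^ (m + 1) + (k : ℚ) ^ ((m + 2) / 2)) / 2 := by
    ext k
    rw [mul_sum, map_sum, coeff_mk, ← sum_even_choose_desA k]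
    exact sum_congr rfl fun w _ => coeff_invOneSubPow_mul_X_pow (desA_le w) k
  rw [← hcoeff, ← mul_assoc, ← invOneSubPow_inv_eq_one_sub_pow, Units.inv_val, one_mul]
end

section
/- For any integer r ≥ 1 and any n > r, the r-th moment of the number of type B descents of a uniformly random element of B_n^+ equals the r-th moment of the number of type B descents of a uniformly random element of B_n. -/
open scoped Classical

/-- An element of the hyperoctahedral group `B_n`, encoded as an underlying
permutation `u ∈ S_n` together with the set of negated positions (`true` = negated). -/
abbrev BPerm (n : ℕ) := Equiv.Perm (Fin n) × (Fin n → Bool)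

/-- The one-line value `w(i)` (as an integer, positions and values `1,…,n`)
of the signed permutation, with the convention `w(0) = 0`. -/
noncomputable def bval {n : ℕ} (p : BPerm n) (i : ℕ) : ℤ :=
  if h : 1 ≤ i ∧ i ≤ n then
    (if p.2 ⟨i - 1, by omega⟩ then -(((p.1 ⟨i - 1, by omega⟩ : Fin n) : ℕ) + 1 : ℤ)
      else (((p.1 ⟨i - 1, by omega⟩ : Fin n) : ℕ) + 1 : ℤ))
  else 0

/-- The number of type B descents: `0 ≤ i ≤ n-1` with `w(i) > w(i+1)`, where `w(0)=0`. -/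
noncomputable def desB {n : ℕ} (p : BPerm n) : ℕ :=
  ((Finset.range n).filter (fun i => bval p (i + 1) < bval p i)).card

/-- The sign character of `B_n`: `sgn_B(u^J) = (-1)^{|J|} sgn(u)`. -/
noncomputable def sgnB {n : ℕ} (p : BPerm n) : ℤ :=
  (Equiv.Perm.sign p.1 : ℤ) * (-1) ^ ((Finset.univ.filter (fun i => p.2 i = true)).card)

/-!
Let `S_n(F) = ∑_{w ∈ B_n} sgn_B(w) F(des_B w)`. On the `w` that do not end in `±n`, negating the
entry `±n` is a sign-reversing involution preserving `des_B`: an entry of maximal absolute value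
forms exactly one descent with its two neighbours, whatever its sign. The remaining `w` arise from
`B_{n-1}` by appending `n` (same sign and descents) or `-n` (opposite sign, one more descent), so
`S_n(F) = -S_{n-1}(ΔF)` with `ΔF(x) = F(x+1) - F(x)`, hence `S_n(F) = (-1)^n (Δ^n F)(0)`. This
vanishes for `F = x^r`, `r < n`; so `des_B^r` and `1` have equal sums over `B_n^+` and `B_n^-`.
-/

open Finset Function Equiv

namespace BPerm

variable {m : ℕ}

noncomputable def extendLast (σ : Perm (Fin m)) : Perm (Fin (m + 1)) :=
  finSuccEquivLast.symm.permCongr σ.optionCongr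

@[simp] lemma extendLast_castSucc (σ : Perm (Fin m)) (i : Fin m) :
    extendLast σ i.castSucc = (σ i).castSucc := by
  simp [extendLast, permCongr_apply]

@[simp] lemma extendLast_last (σ : Perm (Fin m)) : extendLast σ (Fin.last m) = Fin.last m := by
  simp [extendLast, permCongr_apply]

@[simp] lemma sign_extendLast (σ : Perm (Fin m)) : Perm.sign (extendLast σ) = Perm.sign σ := by
  rw [extendLast, Perm.sign_permCongr, optionCongr_sign]

lemma extendLast_injective : Injective (extendLast (m := m)) :=
  (finSuccEquivLast.symm.permCongr.injective).comp optionCongr_injective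

lemma exists_extendLast_eq {σ : Perm (Fin (m + 1))} (hσ : σ (Fin.last m) = Fin.last m) :
    ∃ τ, extendLast τ = σ := by
  have hne {i : Fin (m + 1)} (hi : i ≠ Fin.last m) : σ i ≠ Fin.last m :=
    fun h => hi (σ.injective (h.trans hσ.symm))
  have hne' {i : Fin (m + 1)} (hi : i ≠ Fin.last m) : σ⁻¹ i ≠ Fin.last m :=
    fun h => hi (by rw [← σ.apply_symm_apply i]; exact (congrArg σ h).trans hσ)
  refine ⟨⟨fun i => (σ i.castSucc).castPred (hne i.castSucc_ne_last),
    fun i => (σ⁻¹ i.castSucc).castPred (hne' i.castSucc_ne_last), fun i => ?_, fun i => ?_⟩, ?_⟩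
  · simp
  · simp
  · ext i
    induction i using Fin.lastCases with
    | last => simp [hσ]
    | cast i => simp

noncomputable def snoc (p : BPerm m) (b : Bool) : BPerm (m + 1) :=
  (extendLast p.1, Fin.snoc p.2 b)

lemma abs_bval_le {n : ℕ} (p : BPerm n) (i : ℕ) : |bval p i| ≤ n := by
  unfold bval
  split
  · have := (p.1 ⟨i - 1, by omega⟩).is_lt
    split <;> rw [abs_le] <;> omega
  · simp

lemma bval_snoc_of_le (p : BPerm m) (b : Bool) {i : ℕ} (hi : i ≤ m) :
    bval (snoc p b) i = bval p i := by
  unfold bval snoc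
  by_cases h : 1 ≤ i
  · rw [dif_pos (by omega), dif_pos ⟨h, hi⟩]
    have he : (⟨i - 1, by omega⟩ : Fin (m + 1)) = Fin.castSucc ⟨i - 1, by omega⟩ := rfl
    dsimp only
    rw [he, extendLast_castSucc]
    simp only [Fin.snoc_castSucc]
    simp
  · rw [dif_neg (by omega), dif_neg (by omega)]

lemma bval_snoc_last (p : BPerm m) (b : Bool) :
    bval (snoc p b) (m + 1) = if b then -((m : ℤ) + 1) else (m : ℤ) + 1 := by
  unfold bval snoc
  rw [dif_pos (by omega)]
  have he : (⟨m + 1 - 1, by omega⟩ : Fin (m + 1)) = Fin.last m := rfl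
  dsimp only
  rw [he, extendLast_last]
  simp only [Fin.snoc_last]
  simp [Fin.last]

lemma desB_snoc (p : BPerm m) (b : Bool) : desB (snoc p b) = desB p + b.toNat := by
  have hbound := abs_le.mp (abs_bval_le p m)
  have hlast : (bval (snoc p b) (m + 1) < bval (snoc p b) m) = (b = true) := by
    rw [bval_snoc_last, bval_snoc_of_le p b le_rfl]
    cases b <;> simp <;> omega
  unfold desB
  rw [range_add_one, filter_insert]
  simp only [hlast]
  rw [filter_congr (p := fun i => bval (snoc p b) (i + 1) < bval (snoc p b) i)
    (q := fun i => bval p (i + 1) < bval p i) fun i hi => by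
      rw [bval_snoc_of_le p b (mem_range.mp hi).le, bval_snoc_of_le p b (mem_range.mp hi)]]
  cases b <;> simp [card_insert_of_notMem]

lemma sgnB_snoc (p : BPerm m) (b : Bool) : sgnB (snoc p b) = sgnB p * (-1) ^ b.toNat := by
  have hcard : #(univ.filter fun i => Fin.snoc (α := fun _ => Bool) p.2 b i = true)
      = #(univ.filter fun i => p.2 i = true) + b.toNat := by
    rw [card_filter, card_filter, Fin.sum_univ_castSucc]
    cases b <;> simp
  unfold sgnB snoc
  dsimp only
  rw [sign_extendLast, hcard, pow_add, mul_assoc]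

lemma snoc_injective2 : Injective2 (snoc (m := m)) := by
  intro p q b c h
  obtain ⟨hσ, hs⟩ := Prod.mk.inj h
  obtain ⟨hf, rfl⟩ := Fin.snoc_injective2 hs
  exact ⟨Prod.ext (extendLast_injective hσ) hf, rfl⟩

lemma sum_filter_last_eq_sum_snoc {R : Type*} [AddCommMonoid R] (f : BPerm (m + 1) → R) :
    ∑ p ∈ univ.filter (fun p : BPerm (m + 1) => p.1 (Fin.last m) = Fin.last m), f p
      = ∑ p : BPerm m, ∑ b : Bool, f (snoc p b) := by
  rw [← Fintype.sum_prod_type']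
  symm
  refine sum_nbij (fun x => snoc x.1 x.2) (fun x _ => by simp [snoc])
    (fun x _ y _ h => Prod.ext_iff.mpr (snoc_injective2 h)) (fun p hp => ?_) (fun _ _ => rfl)
  obtain ⟨τ, hτ⟩ := exists_extendLast_eq (mem_filter.mp hp).2
  refine ⟨((τ, Fin.init p.2), p.2 (Fin.last m)), mem_univ _, ?_⟩
  simp [snoc, hτ]

section negate

variable {n : ℕ}

def negateAt (p : BPerm n) (j : Fin n) : BPerm n :=
  (p.1, update p.2 j (!p.2 j))

lemma negateAt_negateAt (p : BPerm n) (j : Fin n) : negateAt (negateAt p j) j = p := by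
  simp [negateAt]

lemma negateAt_ne (p : BPerm n) (j : Fin n) : negateAt p j ≠ p := fun h => by
  simpa [negateAt] using congrFun (congrArg Prod.snd h) j

lemma sgnB_negateAt (p : BPerm n) (j : Fin n) : sgnB (negateAt p j) = -sgnB p := by
  have hsplit (f : Fin n → Bool) : (-1 : ℤ) ^ #(univ.filter fun i => f i = true)
      = (-1) ^ (f j).toNat * ∏ i ∈ {j}ᶜ, (-1) ^ (f i).toNat := by
    rw [← Fintype.prod_eq_mul_prod_compl j fun i => (-1 : ℤ) ^ (f i).toNat, card_filter,
      ← prod_pow_eq_pow_sum]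
    congr with i
    cases f i <;> rfl
  have hrest : ∏ i ∈ {j}ᶜ, (-1 : ℤ) ^ (update p.2 j (!p.2 j) i).toNat
      = ∏ i ∈ {j}ᶜ, (-1) ^ (p.2 i).toNat :=
    prod_congr rfl fun i hi => by rw [update_of_ne (by simpa using hi)]
  unfold sgnB negateAt
  dsimp only
  rw [hsplit, hsplit p.2, hrest, update_self]
  cases p.2 j <;> simp

lemma bval_negateAt_of_ne (p : BPerm n) (j : Fin n) {k : ℕ} (hk : k ≠ j + 1) :
    bval (negateAt p j) k = bval p k := by
  unfold bval negateAt
  split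
  · have hne : (⟨k - 1, by omega⟩ : Fin n) ≠ j := fun h => hk (by
      have := congrArg Fin.val h
      dsimp only at this
      omega)
    simp only [update_of_ne hne]
  · rfl

end negate

section maxEntry

variable {q : BPerm (m + 1)} {j : Fin (m + 1)}

lemma bval_of_eq_last (hj : q.1 j = Fin.last m) :
    bval q (j + 1) = if q.2 j then -((m : ℤ) + 1) else (m : ℤ) + 1 := by
  unfold bval
  rw [dif_pos (by omega)]
  have he : (⟨(j : ℕ) + 1 - 1, by omega⟩ : Fin (m + 1)) = j := Fin.ext (by simp)
  rw [he, hj]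
  simp [Fin.last]

lemma abs_bval_le_of_eq_last (hj : q.1 j = Fin.last m) {k : ℕ} (hk : k ≠ j + 1) :
    |bval q k| ≤ m := by
  unfold bval
  split
  · next hk' =>
    have hne : (⟨k - 1, by omega⟩ : Fin (m + 1)) ≠ j := fun h => hk (by
      have := congrArg Fin.val h
      dsimp only at this
      omega)
    have hlt : ((q.1 ⟨k - 1, by omega⟩ : Fin (m + 1)) : ℕ) < m :=
      Fin.val_lt_last fun h => hne (q.1.injective (h.trans hj.symm))
    split <;> rw [abs_le] <;> omega
  · simp

lemma card_filter_descent_pair (hj : q.1 j = Fin.last m) :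
    #(({(j : ℕ), (j : ℕ) + 1} : Finset ℕ).filter fun i => bval q (i + 1) < bval q i) = 1 := by
  have hval := bval_of_eq_last hj
  have hleft := abs_le.mp (abs_bval_le_of_eq_last hj (k := j) (by omega))
  have hright := abs_le.mp (abs_bval_le_of_eq_last hj (k := j + 1 + 1) (by omega))
  rw [filter_insert, filter_singleton]
  cases hb : q.2 j <;> simp only [hb, Bool.false_eq_true, ↓reduceIte] at hval <;>
    rw [hval] <;> split_ifs <;> first | omega | simp

lemma desB_eq_card_filter_sdiff_add_one (hj : q.1 j = Fin.last m) (hjm : (j : ℕ) < m) :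
    desB q = #((range (m + 1) \ {(j : ℕ), (j : ℕ) + 1}).filter
      fun i => bval q (i + 1) < bval q i) + 1 := by
  have hsub : ({(j : ℕ), (j : ℕ) + 1} : Finset ℕ) ⊆ range (m + 1) := by
    intro i hi
    simp only [mem_insert, mem_singleton] at hi
    simp only [mem_range]
    omega
  unfold desB
  conv_lhs => rw [← sdiff_union_of_subset hsub]
  rw [filter_union, card_union_of_disjoint (disjoint_filter_filter sdiff_disjoint),
    card_filter_descent_pair hj]

lemma desB_negateAt_of_eq_last (hj : q.1 j = Fin.last m) (hjm : (j : ℕ) < m) :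
    desB (negateAt q j) = desB q := by
  rw [desB_eq_card_filter_sdiff_add_one hj hjm,
    desB_eq_card_filter_sdiff_add_one (q := negateAt q j) hj hjm]
  congr 2
  refine filter_congr fun i hi => ?_
  simp only [mem_sdiff, mem_insert, mem_singleton, not_or] at hi
  rw [bval_negateAt_of_ne q j (k := i) (by omega), bval_negateAt_of_ne q j (k := i + 1) (by omega)]

end maxEntry

lemma sgnB_eq_one_or_neg_one {n : ℕ} (p : BPerm n) : sgnB p = 1 ∨ sgnB p = -1 := by
  rcases Int.units_eq_one_or (Perm.sign p.1) with h | h <;>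
    rcases neg_one_pow_eq_or ℤ #(univ.filter fun i => p.2 i = true) with h' | h' <;>
    simp [sgnB, h, h']

section signedSum

open fwdDiff

variable {R : Type*} [CommRing R]

noncomputable def signedDesSum (n : ℕ) (F : R → R) : R :=
  ∑ p : BPerm n, (sgnB p : R) * F (desB p)

lemma sum_filter_last_ne_sgnB_mul_eq_zero (F : R → R) :
    ∑ p ∈ univ.filter (fun p : BPerm (m + 1) => p.1 (Fin.last m) ≠ Fin.last m),
      (sgnB p : R) * F (desB p) = 0 := by
  refine sum_involution (fun p _ => negateAt p (p.1⁻¹ (Fin.last m))) (fun p hp => ?_)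
    (fun p _ _ => negateAt_ne _ _) (fun p hp => by simpa [negateAt] using hp)
    (fun p _ => negateAt_negateAt _ _)
  have hj : p.1 (p.1⁻¹ (Fin.last m)) = Fin.last m := p.1.apply_symm_apply _
  have hjm : ((p.1⁻¹ (Fin.last m) : Fin (m + 1)) : ℕ) < m :=
    Fin.val_lt_last fun h => (mem_filter.mp hp).2 (by rwa [h] at hj)
  rw [desB_negateAt_of_eq_last hj hjm, sgnB_negateAt]
  push_cast
  ring

lemma signedDesSum_succ (F : R → R) :
    signedDesSum (m + 1) F = -signedDesSum m (Δ_[1] F) := by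
  rw [signedDesSum, ← sum_filter_add_sum_filter_not univ
    (fun p : BPerm (m + 1) => p.1 (Fin.last m) = Fin.last m), sum_filter_last_eq_sum_snoc,
    sum_filter_last_ne_sgnB_mul_eq_zero, add_zero, signedDesSum, ← sum_neg_distrib]
  refine sum_congr rfl fun p _ => ?_
  simp only [Fintype.sum_bool, desB_snoc, sgnB_snoc, fwdDiff, Bool.toNat_true, Bool.toNat_false]
  push_cast
  rw [add_zero]
  ring

lemma signedDesSum_zero (F : R → R) : signedDesSum 0 F = F 0 := by
  simp [signedDesSum, desB, sgnB, Subsingleton.elim _ (1 : Perm (Fin 0))]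

lemma signedDesSum_eq_fwdDiff_iter (n : ℕ) (F : R → R) :
    signedDesSum n F = (-1) ^ n * (Δ_[1])^[n] F 0 := by
  induction n generalizing F with
  | zero => simp [signedDesSum_zero]
  | succ m ih => rw [signedDesSum_succ, ih, iterate_succ_apply, pow_succ]; ring

lemma signedDesSum_pow_eq_zero {n r : ℕ} (h : r < n) : signedDesSum n (· ^ r : R → R) = 0 := by
  rw [signedDesSum_eq_fwdDiff_iter, fwdDiff_iter_pow_eq_zero_of_lt h, Pi.zero_apply, mul_zero]

end signedSum

end BPerm

lemma Finset.sum_eq_two_mul_sum_filter_of_sum_mul_eq_zero {α R : Type*} [Fintype α] [CommRing R]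
    {s : α → ℤ} (hs : ∀ a, s a = 1 ∨ s a = -1) {g : α → R} (hg : ∑ a, (s a : R) * g a = 0) :
    ∑ a, g a = 2 * ∑ a ∈ univ.filter (fun a => s a = 1), g a := by
  rw [← add_zero (∑ a, g a), ← hg, ← sum_add_distrib, sum_filter, mul_sum]
  refine sum_congr rfl fun a _ => ?_
  rcases hs a with h | h <;> simp [h, two_mul]

theorem typeB_pm_eulerian_moments_general (n r : ℕ) (h : r < n) :
    (∑ p ∈ Finset.univ.filter (fun p : BPerm n => sgnB p = 1), ((desB p : ℚ)) ^ r) /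
        ((Finset.univ.filter (fun p : BPerm n => sgnB p = 1)).card : ℚ)
      = (∑ p : BPerm n, ((desB p : ℚ)) ^ r) / ((Finset.univ : Finset (BPerm n)).card : ℚ) := by
  have hmoment := sum_eq_two_mul_sum_filter_of_sum_mul_eq_zero BPerm.sgnB_eq_one_or_neg_one
    (BPerm.signedDesSum_pow_eq_zero (R := ℚ) h)
  have hcard := sum_eq_two_mul_sum_filter_of_sum_mul_eq_zero BPerm.sgnB_eq_one_or_neg_one
    (g := fun _ => (1 : ℚ)) (by simpa [BPerm.signedDesSum] using
      BPerm.signedDesSum_pow_eq_zero (R := ℚ) (r := 0) (Nat.zero_lt_of_lt h))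
  simp only [sum_const, nsmul_one] at hcard
  rw [hmoment, hcard, mul_div_mul_left _ _ two_ne_zero]

theorem typeB_pm_eulerian_moments (n r : ℕ) (hr : 1 ≤ r) (h : r < n) :
    (∑ p ∈ Finset.univ.filter (fun p : BPerm n => sgnB p = 1), ((desB p : ℚ)) ^ r) /
        ((Finset.univ.filter (fun p : BPerm n => sgnB p = 1)).card : ℚ)
      = (∑ p : BPerm n, ((desB p : ℚ)) ^ r) / ((Finset.univ : Finset (BPerm n)).card : ℚ) :=
  typeB_pm_eulerian_moments_general n r h
end

section
/- For all integers n ≥ 1 and k ≥ 0: ∑_{w ∈ B_n, sgn_B(w)=1} C(n + k - des_B(w), n) = ((2k+1)^n + 1)/2. -/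
open scoped Classical

/-!
Inserting the letter `n + 1`, with either sign, into one of the `n + 1` slots of the window of a
signed permutation in `B_n` produces every element of `B_{n+1}` exactly once. If `w` has `d`
descents, the new permutation still has `d` descents in `2d + 1` of these `2(n + 1)` cases
(inserting right after a descent, or positively at the end) and `d + 1` in the others, so the
identity `choose_descent_step` gives `∑_w C(n + k - des_B w, n) = (2k + 1)^n` by induction.
Inserting into an inner slot with the two signs gives the same descent number and opposite signs,
so in the signed sum only the last slot survives, and Pascal's rule gives
`∑_w sgn_B(w) C(n + k - des_B w, n) = 1`. The theorem is the average of the two sums.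
-/

variable {n : ℕ}

lemma bval_zero (p : BPerm n) : bval p 0 = 0 := by simp [bval]

lemma bval_of_lt (p : BPerm n) {t : ℕ} (ht : n < t) : bval p t = 0 := by
  simp [bval, show ¬t ≤ n by omega]

lemma bval_succ (p : BPerm n) (k : Fin n) :
    bval p (k + 1) = if p.2 k then -((p.1 k : ℕ) + 1 : ℤ) else ((p.1 k : ℕ) + 1 : ℤ) := by
  rw [bval, dif_pos ⟨by omega, by omega⟩]
  rfl

lemma abs_bval_le (p : BPerm n) (t : ℕ) : |bval p t| ≤ n := by
  unfold bval
  split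
  · have := (p.1 ⟨t - 1, by omega⟩).is_lt
    split <;> rw [abs_le] <;> constructor <;> omega
  · simp

noncomputable def isDescent (p : BPerm n) (i : ℕ) : Bool := decide (bval p (i + 1) < bval p i)

lemma desB_eq_sum (p : BPerm n) : desB p = ∑ i ∈ Finset.range n, (isDescent p i).toNat := by
  rw [desB, Finset.card_filter]
  refine Finset.sum_congr rfl fun i _ => ?_
  by_cases h : bval p (i + 1) < bval p i <;> simp [isDescent, h]

lemma desB_le (p : BPerm n) : desB p ≤ n :=
  (Finset.card_filter_le _ _).trans (Finset.card_range n).le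

lemma card_filter_isDescent (p : BPerm n) :
    (Finset.univ.filter fun i : Fin n => isDescent p i).card = desB p := by
  rw [desB_eq_sum, Finset.card_filter,
    Fin.sum_univ_eq_sum_range (fun i => if isDescent p i then 1 else 0)]
  exact Finset.sum_congr rfl fun i _ => by cases isDescent p i <;> rfl

lemma card_filter_not_isDescent (p : BPerm n) :
    (Finset.univ.filter fun i : Fin n => ¬isDescent p i).card = n - desB p := by
  have := Finset.card_filter_add_card_filter_not (s := Finset.univ) (fun i : Fin n => isDescent p i)
  rw [card_filter_isDescent, Finset.card_univ, Fintype.card_fin] at this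
  omega

/-- Insert the letter `n + 1`, negated if `s`, at the `0`-based position `j` of the window
notation of `p`. -/
def insertMax (p : BPerm n) (j : Fin (n + 1)) (s : Bool) : BPerm (n + 1) :=
  ((finSuccEquiv' j).trans (p.1.optionCongr.trans finSuccEquivLast.symm), Fin.insertNth j s p.2)

section insertMax

variable (p : BPerm n) (j : Fin (n + 1)) (s : Bool)

@[simp] lemma insertMax_fst_apply_self : (insertMax p j s).1 j = Fin.last n := by
  simp [insertMax]

@[simp] lemma insertMax_fst_apply_succAbove (k : Fin n) :
    (insertMax p j s).1 (j.succAbove k) = (p.1 k).castSucc := by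
  simp [insertMax]

@[simp] lemma insertMax_snd : (insertMax p j s).2 = Fin.insertNth j s p.2 := rfl

lemma bval_insertMax_succ_self :
    bval (insertMax p j s) (j + 1) = if s then -((n : ℤ) + 1) else (n : ℤ) + 1 := by
  simp [bval_succ]

lemma bval_insertMax_succ_succAbove (k : Fin n) :
    bval (insertMax p j s) (j.succAbove k + 1) = bval p (k + 1) := by
  simp [bval_succ]

lemma bval_insertMax_of_le {t : ℕ} (ht : t ≤ j) : bval (insertMax p j s) t = bval p t := by
  rcases t with _ | t
  · simp only [bval_zero]
  · have hk : (j.succAbove ⟨t, by omega⟩ : ℕ) = t := by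
      rw [Fin.succAbove_of_castSucc_lt _ _ (Fin.lt_def.2 (by simp; omega))]; simp
    simpa [hk] using bval_insertMax_succ_succAbove p j s ⟨t, by omega⟩

lemma bval_insertMax_succ_of_lt {t : ℕ} (ht : j < t) :
    bval (insertMax p j s) (t + 1) = bval p t := by
  rcases le_or_gt t n with htn | htn
  · obtain ⟨t, rfl⟩ : ∃ u, t = u + 1 := ⟨t - 1, by omega⟩
    have hk : (j.succAbove ⟨t, by omega⟩ : ℕ) = t + 1 := by
      rw [Fin.succAbove_of_le_castSucc _ _ (Fin.le_def.2 (by simp; omega))]; simp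
    simpa [hk] using bval_insertMax_succ_succAbove p j s ⟨t, by omega⟩
  · rw [bval_of_lt _ (by omega), bval_of_lt _ htn]

lemma isDescent_insertMax_of_lt {i : ℕ} (hi : i < j) :
    isDescent (insertMax p j s) i = isDescent p i := by
  simp only [isDescent, bval_insertMax_of_le p j s hi.le, bval_insertMax_of_le p j s hi]

lemma isDescent_insertMax_self : isDescent (insertMax p j s) j = s := by
  have := abs_le.1 (abs_bval_le p j)
  cases s <;> simp [isDescent, bval_insertMax_succ_self, bval_insertMax_of_le] <;> omega

lemma isDescent_insertMax_succ_self : isDescent (insertMax p j s) (j + 1) = !s := by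
  have := abs_le.1 (abs_bval_le p (j + 1))
  cases s <;> simp [isDescent, bval_insertMax_succ_self, bval_insertMax_succ_of_lt] <;> omega

lemma isDescent_insertMax_succ_of_lt {i : ℕ} (hi : j < i) :
    isDescent (insertMax p j s) (i + 1) = isDescent p i := by
  simp only [isDescent, bval_insertMax_succ_of_lt p j s hi,
    bval_insertMax_succ_of_lt p j s (hi.trans (Nat.lt_succ_self i))]

end insertMax

lemma desB_insertMax_last (p : BPerm n) (s : Bool) :
    desB (insertMax p (Fin.last n) s) = desB p + s.toNat := by
  rw [desB_eq_sum, desB_eq_sum, Finset.sum_range_succ]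
  congr 1
  · refine Finset.sum_congr rfl fun i hi => ?_
    rw [isDescent_insertMax_of_lt p _ s (by simpa using hi)]
  · simpa using congrArg Bool.toNat (isDescent_insertMax_self p (Fin.last n) s)

lemma desB_insertMax_castSucc (p : BPerm n) (i : Fin n) (s : Bool) :
    desB (insertMax p i.castSucc s) = desB p + (!isDescent p i).toNat := by
  obtain ⟨r, hr⟩ : ∃ r, n = i + 1 + r := ⟨n - (i + 1), by omega⟩
  rw [desB_eq_sum, desB_eq_sum, show Finset.range (n + 1) = Finset.range (i + (r + 2)) by
      congr 1; omega, show Finset.range n = Finset.range (i + (r + 1)) by congr 1; omega,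
    Finset.sum_range_add _ _ (r + 2), Finset.sum_range_add _ _ (r + 1),
    Finset.sum_range_succ' _ (r + 1), Finset.sum_range_succ' _ r, Finset.sum_range_succ' _ r]
  have hprefix : ∑ t ∈ Finset.range i, (isDescent (insertMax p i.castSucc s) t).toNat
      = ∑ t ∈ Finset.range i, (isDescent p t).toNat :=
    Finset.sum_congr rfl fun t ht => by
      rw [isDescent_insertMax_of_lt p _ s (by simpa using ht)]
  have hsuffix :
      ∑ t ∈ Finset.range r, (isDescent (insertMax p i.castSucc s) (i + (t + 1 + 1))).toNat
        = ∑ t ∈ Finset.range r, (isDescent p (i + (t + 1))).toNat :=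
    Finset.sum_congr rfl fun t _ => by
      rw [← isDescent_insertMax_succ_of_lt p i.castSucc s (by simp)]; rfl
  have hself := isDescent_insertMax_self p i.castSucc s
  have hnext := isDescent_insertMax_succ_self p i.castSucc s
  simp only [Fin.val_castSucc] at hself hnext
  simp only [hprefix, hsuffix, add_zero, zero_add, hself, hnext]
  cases s <;> cases isDescent p i <;> simp <;> omega

lemma sign_finSuccEquiv'_trans_finSuccEquivLast_symm (j : Fin (n + 1)) :
    Equiv.Perm.sign ((finSuccEquiv' j).trans finSuccEquivLast.symm) = (-1) ^ (n - j) := by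
  have h : (finSuccEquiv' j).trans finSuccEquivLast.symm
      = Equiv.permCongr Fin.revPerm (Fin.cycleRange j.rev) := by
    ext x
    refine Fin.succAboveCases j ?_ (fun k => ?_) x <;> simp [Fin.rev_succAbove]
    omega
  rw [h, Equiv.Perm.sign_permCongr, Fin.sign_cycleRange, Fin.val_rev]
  congr 1
  omega

lemma sign_insertMax_fst (p : BPerm n) (j : Fin (n + 1)) (s : Bool) :
    Equiv.Perm.sign (insertMax p j s).1 = (-1) ^ (n - j) * Equiv.Perm.sign p.1 := by
  have h : (insertMax p j s).1 = Equiv.permCongr finSuccEquivLast.symm p.1.optionCongr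
      * (finSuccEquiv' j).trans finSuccEquivLast.symm := by
    ext x
    simp [insertMax, Equiv.permCongr_apply]
  rw [h, map_mul, Equiv.Perm.sign_permCongr, Equiv.optionCongr_sign,
    sign_finSuccEquiv'_trans_finSuccEquivLast_symm, mul_comm]

lemma card_filter_insertNth_eq_true (j : Fin (n + 1)) (s : Bool) (b : Fin n → Bool) :
    (Finset.univ.filter fun i => Fin.insertNth (α := fun _ => Bool) j s b i = true).card
      = s.toNat + (Finset.univ.filter fun i => b i = true).card := by
  rw [Finset.card_filter, Finset.card_filter, Fin.sum_univ_succAbove _ j]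
  cases s <;> simp

lemma sgnB_insertMax (p : BPerm n) (j : Fin (n + 1)) (s : Bool) :
    sgnB (insertMax p j s) = (-1) ^ (n - j) * (-1) ^ s.toNat * sgnB p := by
  rw [sgnB, sgnB, sign_insertMax_fst, insertMax_snd, card_filter_insertNth_eq_true, pow_add]
  push_cast
  ring

lemma insertMax_injective :
    Function.Injective fun x : BPerm n × Fin (n + 1) × Bool => insertMax x.1 x.2.1 x.2.2 := by
  rintro ⟨p, j, s⟩ ⟨p', j', s'⟩ h
  simp only at h
  obtain rfl : j = j' := (insertMax p j s).1.injective <| by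
    rw [insertMax_fst_apply_self, h, insertMax_fst_apply_self]
  obtain ⟨hfst, hsnd⟩ := Prod.ext_iff.1 h
  obtain ⟨rfl, hsigns⟩ := Fin.insertNth_inj.1 (by simpa only [insertMax_snd] using hsnd)
  have hperm : p.1 = p'.1 := Equiv.ext fun k => Fin.castSucc_injective _ <| by
    rw [← insertMax_fst_apply_succAbove p j s, ← insertMax_fst_apply_succAbove p' j s, hfst]
  rw [Prod.ext hperm hsigns]

lemma insertMax_bijective :
    Function.Bijective fun x : BPerm n × Fin (n + 1) × Bool => insertMax x.1 x.2.1 x.2.2 := by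
  refine (Fintype.bijective_iff_injective_and_card _).2 ⟨insertMax_injective, ?_⟩
  simp [Fintype.card_perm, Nat.factorial_succ, pow_succ]
  ring

lemma sum_bperm_succ {M : Type*} [AddCommMonoid M] (g : BPerm (n + 1) → M) :
    ∑ q, g q = ∑ p : BPerm n, ∑ j, ∑ s, g (insertMax p j s) := by
  rw [← Fintype.sum_bijective _ insertMax_bijective _ g fun _ => rfl, Fintype.sum_prod_type]
  simp only [Fintype.sum_prod_type]

lemma sum_insertMax_desB {M : Type*} [AddCommMonoid M] (p : BPerm n) (f : ℕ → M) :
    ∑ j, ∑ s, f (desB (insertMax p j s))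
      = (2 * desB p + 1) • f (desB p) + (2 * (n - desB p) + 1) • f (desB p + 1) := by
  have hpair : ∀ i : Fin n, ∑ s, f (desB (insertMax p i.castSucc s))
      = if isDescent p i then 2 • f (desB p) else 2 • f (desB p + 1) := fun i => by
    simp only [Fintype.sum_bool, desB_insertMax_castSucc]
    cases isDescent p i <;> simp [two_nsmul]
  rw [Fin.sum_univ_castSucc]
  simp only [hpair, Finset.sum_ite, Finset.sum_const, card_filter_isDescent,
    card_filter_not_isDescent, Fintype.sum_bool, desB_insertMax_last]
  simp only [smul_smul, add_nsmul, one_nsmul, Bool.toNat_true, Bool.toNat_false, add_zero,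
    mul_comm 2]
  abel

lemma sum_insertMax_sgnB_smul_desB {M : Type*} [AddCommGroup M] (p : BPerm n) (f : ℕ → M) :
    ∑ j, ∑ s, sgnB (insertMax p j s) • f (desB (insertMax p j s))
      = sgnB p • (f (desB p) - f (desB p + 1)) := by
  rw [Fin.sum_univ_castSucc]
  simp [desB_insertMax_castSucc, desB_insertMax_last, sgnB_insertMax, mul_smul, smul_sub,
    neg_add_eq_sub]

lemma choose_descent_step (n k d : ℕ) (hd : d ≤ n) :
    (2 * d + 1) * (n + k - d + 1).choose (n + 1) + (2 * (n - d) + 1) * (n + k - d).choose (n + 1)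
      = (2 * k + 1) * (n + k - d).choose n := by
  rcases lt_or_ge k d with hkd | hdk
  · rw [Nat.choose_eq_zero_of_lt (by omega : n + k - d + 1 < n + 1),
      Nat.choose_eq_zero_of_lt (by omega : n + k - d < n + 1),
      Nat.choose_eq_zero_of_lt (by omega : n + k - d < n)]
    simp
  · have habsorb := Nat.choose_succ_right_eq (n + k - d) n
    rw [show n + k - d - n = k - d by omega] at habsorb
    rw [Nat.choose_succ_succ']
    zify [hd, hdk] at habsorb ⊢
    linear_combination 2 * habsorb

theorem sum_choose_desB (n k : ℕ) :
    ∑ p : BPerm n, (n + k - desB p).choose n = (2 * k + 1) ^ n := by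
  induction n with
  | zero => simp
  | succ n ih =>
    rw [sum_bperm_succ, pow_succ, mul_comm, ← ih, Finset.mul_sum]
    refine Finset.sum_congr rfl fun p _ => ?_
    rw [sum_insertMax_desB (f := fun d => (n + 1 + k - d).choose (n + 1)), smul_eq_mul, smul_eq_mul,
      show n + 1 + k - desB p = n + k - desB p + 1 by have := desB_le p; omega,
      show n + 1 + k - (desB p + 1) = n + k - desB p by omega,
      choose_descent_step n k _ (desB_le p)]

theorem sum_sgnB_mul_choose_desB (n k : ℕ) :
    ∑ p : BPerm n, sgnB p * (n + k - desB p).choose n = 1 := by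
  induction n with
  | zero => simp [sgnB, Subsingleton.elim _ (1 : Equiv.Perm (Fin 0))]
  | succ n ih =>
    rw [sum_bperm_succ, ← ih]
    refine Finset.sum_congr rfl fun p _ => ?_
    simp only [← smul_eq_mul]
    rw [sum_insertMax_sgnB_smul_desB (f := fun d => ((n + 1 + k - d).choose (n + 1) : ℤ)),
      show n + 1 + k - desB p = n + k - desB p + 1 by have := desB_le p; omega,
      show n + 1 + k - (desB p + 1) = n + k - desB p by omega, Nat.choose_succ_succ']
    push_cast
    ring

lemma sgnB_eq_one_or_neg_one (p : BPerm n) : sgnB p = 1 ∨ sgnB p = -1 := by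
  rcases Int.units_eq_one_or (Equiv.Perm.sign p.1) with h | h <;>
    rcases neg_one_pow_eq_or ℤ (Finset.univ.filter fun i => p.2 i = true).card with h' | h' <;>
    simp [sgnB, h, h']

theorem typeB_binomial_sum_general (n k : ℕ) :
    (∑ p ∈ Finset.univ.filter (fun p : BPerm n => sgnB p = 1),
        (Nat.choose (n + k - desB p) n : ℚ))
      = ((2 * (k : ℚ) + 1) ^ n + 1) / 2 := by
  have hsum : ∑ p : BPerm n, (Nat.choose (n + k - desB p) n : ℚ) = (2 * k + 1) ^ n := by
    exact_mod_cast sum_choose_desB n k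
  have hsigned : ∑ p : BPerm n, (sgnB p : ℚ) * Nat.choose (n + k - desB p) n = 1 := by
    exact_mod_cast sum_sgnB_mul_choose_desB n k
  have hsplit (p : BPerm n) : (if sgnB p = 1 then (Nat.choose (n + k - desB p) n : ℚ) else 0)
      = (Nat.choose (n + k - desB p) n + sgnB p * Nat.choose (n + k - desB p) n) / 2 := by
    rcases sgnB_eq_one_or_neg_one p with h | h <;> simp [h]
  rw [Finset.sum_filter, Finset.sum_congr rfl fun p _ => hsplit p, ← Finset.sum_div,
    Finset.sum_add_distrib, hsum, hsigned]

theorem typeB_binomial_sum (n k : ℕ) (hn : 1 ≤ n) :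
    (∑ p ∈ Finset.univ.filter (fun p : BPerm n => sgnB p = 1),
        (Nat.choose (n + k - desB p) n : ℚ))
      = ((2 * (k : ℚ) + 1) ^ n + 1) / 2 :=
  typeB_binomial_sum_general n k
end
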